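/- Let d ≥ 1 and let N be a natural number with N > d. For i = 1,2 let χᵢ : ℝ^{2d} → ℝ^{2d} be bijections such that χᵢ and χᵢ⁻¹ are Lipschitz. Let T₂ : 𝒮(ℝ^d) → 𝒮(ℝ^d) and T₁ : 𝒮(ℝ^d) → L²(ℝ^d) be linear maps admitting measurable Wigner kernels k₁, k₂ : ℝ^{2d} × ℝ^{2d} → ℂ, i.e., for all f,g ∈ 𝒮(ℝ^d) and all z ∈ ℝ^{2d}, W(Tᵢf, Tᵢg)(z) = ∫_{ℝ^{2d}} kᵢ(z,w) W(f,g)(w) dw with absolutely convergent integrals, and suppose |kᵢ(z,w)| ≤ C ⟨z − χᵢ(w)⟩^{−2N} for all z,w. Then the composition T₁T₂ admits the Wigner kernel k₁₂(z,u) := ∫_{ℝ^{2d}} k₁(z,w) k₂(w,u) dw, i.e., W(T₁T₂f, T₁T₂g)(z) = ∫_{ℝ^{2d}} k₁₂(z,u) W(f,g)(u) du for all f,g ∈ 𝒮(ℝ^d), and there is C' > 0 with |k₁₂(z,u)| ≤ C' ⟨z − χ₁(χ₂(u))⟩^{−2N} for all z,u ∈ ℝ^{2d}. -/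

import Mathlib

open MeasureTheory Complex
open scoped RealInnerProductSpace

noncomputable section

/-- `ℝ^d` with the Euclidean norm. -/
abbrev Ed (d : ℕ) := EuclideanSpace ℝ (Fin d)

/-- Japanese bracket on `ℝ^n`. -/
def jbE {n : ℕ} (z : Ed n) : ℝ := Real.sqrt (1 + ‖z‖ ^ 2)

/-- Japanese bracket on `ℝ^{2d}`, viewed as a product `ℝ^d × ℝ^d`. -/
def jb {d : ℕ} (z : Ed d × Ed d) : ℝ := Real.sqrt (1 + ‖z.1‖ ^ 2 + ‖z.2‖ ^ 2)

/-- Cross-Wigner distribution `W(f,g)(x,ξ)`. -/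
def wigner {d : ℕ} (f g : Ed d → ℂ) (x ξ : Ed d) : ℂ :=
  ∫ t : Ed d, f (x + (2 : ℝ)⁻¹ • t) * (starRingEnd ℂ) (g (x - (2 : ℝ)⁻¹ • t)) *
    Complex.exp (-(2 * Real.pi * Complex.I) * ((inner ℝ t ξ : ℝ) : ℂ))

/-- Fourier transform `f̂(ξ) = ∫ f(t) e^{-2πi t·ξ} dt`. -/
def ft {d : ℕ} (f : Ed d → ℂ) (ξ : Ed d) : ℂ :=
  ∫ t : Ed d, f t * Complex.exp (-(2 * Real.pi * Complex.I) * ((inner ℝ t ξ : ℝ) : ℂ))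

/-- Gradient in the first group of `n` variables. -/
def gradFst {n : ℕ} (Φ : Ed n × Ed n → ℝ) (x ξ : Ed n) : Ed n :=
  (EuclideanSpace.equiv (Fin n) ℝ).symm fun i =>
    fderiv ℝ (fun y : Ed n => Φ (y, ξ)) x (EuclideanSpace.single i 1)

/-- Gradient in the second group of `n` variables. -/
def gradSnd {n : ℕ} (Φ : Ed n × Ed n → ℝ) (x ξ : Ed n) : Ed n :=
  (EuclideanSpace.equiv (Fin n) ℝ).symm fun i =>
    fderiv ℝ (fun η : Ed n => Φ (x, η)) ξ (EuclideanSpace.single i 1)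

/-- Matrix of mixed second partial derivatives `(∂²_{x,ξ}Φ)_{ij} = ∂_{x_i}∂_{ξ_j}Φ`. -/
def mixedHess {n : ℕ} (Φ : Ed n × Ed n → ℝ) (x ξ : Ed n) : Matrix (Fin n) (Fin n) ℝ :=
  Matrix.of fun i j =>
    fderiv ℝ (fun y : Ed n =>
      fderiv ℝ (fun η : Ed n => Φ (y, η)) ξ (EuclideanSpace.single j 1)) x
      (EuclideanSpace.single i 1)

/-- Tame phase function on `ℝ^{2n}`. -/
def TamePhase {n : ℕ} (Φ : Ed n × Ed n → ℝ) : Prop :=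
  ContDiff ℝ (⊤ : ℕ∞) Φ ∧
  (∀ k : ℕ, 2 ≤ k → ∃ C > 0, ∀ z : Ed n × Ed n, ‖iteratedFDeriv ℝ k Φ z‖ ≤ C) ∧
  ∃ δ > 0, ∀ x ξ : Ed n, δ ≤ |(mixedHess Φ x ξ).det|

/-- Shubin symbol class `Γ^m(ℝ^{2n})`. -/
def ShubinSymbol {n : ℕ} (m : ℝ) (a : Ed n × Ed n → ℂ) : Prop :=
  ContDiff ℝ (⊤ : ℕ∞) a ∧
  ∀ k : ℕ, ∃ C > 0, ∀ z : Ed n × Ed n, ‖iteratedFDeriv ℝ k a z‖ ≤ C * jb z ^ (m - k)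


section Aux

instance instHaarProdEd (d : ℕ) : (volume : Measure (Ed d × Ed d)).IsAddHaarMeasure := by
  rw [show (volume : Measure (Ed d × Ed d)) = (volume : Measure (Ed d)).prod volume from rfl]
  exact Measure.prod.instIsAddHaarMeasure _ _

lemma aux1 {t o κ s : ℝ} (hs : 0 ≤ s) (ht : 0 < t) (hκ : 0 < κ) (h : t ≤ κ * o) :
    o ^ (-s) ≤ κ ^ s * t ^ (-s) := by
  have ho : 0 < o := by nlinarith
  have h1 : t / κ ≤ o := (div_le_iff₀ hκ).2 (by nlinarith)
  have h2 : o ^ (-s) ≤ (t / κ) ^ (-s) :=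
    Real.rpow_le_rpow_of_nonpos (by positivity) h1 (neg_nonpos.2 hs)
  refine h2.trans_eq ?_
  rw [Real.div_rpow ht.le hκ.le, Real.rpow_neg ht.le, Real.rpow_neg hκ.le,
    div_eq_mul_inv, inv_inv, mul_comm]

lemma aux2 {s κ x y m : ℝ} (hs : 0 ≤ s) (hκ : 1 ≤ κ) (hx : 0 ≤ x) (hy : 0 ≤ y)
    (hm0 : 0 ≤ m) (hm : m ≤ x + κ * y) :
    (1+x) ^ (-s) * (1+y) ^ (-s) ≤
      (2*κ) ^ s * ((1+m) ^ (-s) * ((1+x) ^ (-s) + (1+y) ^ (-s))) := by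
  have hys : (0:ℝ) ≤ (1+y) ^ (-s) := Real.rpow_nonneg (by linarith) _
  have hxs : (0:ℝ) ≤ (1+x) ^ (-s) := Real.rpow_nonneg (by linarith) _
  have hms : (0:ℝ) ≤ (1+m) ^ (-s) := Real.rpow_nonneg (by linarith) _
  rcases le_total x y with hxy | hxy
  · have key : (1+y) ^ (-s) ≤ (2*κ) ^ s * (1+m) ^ (-s) :=
      aux1 hs (by linarith) (by linarith) (by nlinarith)
    calc (1+x) ^ (-s) * (1+y) ^ (-s) ≤ (1+x) ^ (-s) * ((2*κ) ^ s * (1+m) ^ (-s)) :=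
          mul_le_mul_of_nonneg_left key hxs
      _ = (2*κ) ^ s * ((1+m) ^ (-s) * (1+x) ^ (-s)) := by ring
      _ ≤ (2*κ) ^ s * ((1+m) ^ (-s) * ((1+x) ^ (-s) + (1+y) ^ (-s))) := by
          apply mul_le_mul_of_nonneg_left _ (by positivity)
          exact mul_le_mul_of_nonneg_left (by linarith) hms
  · have key : (1+x) ^ (-s) ≤ (2*κ) ^ s * (1+m) ^ (-s) :=
      aux1 hs (by linarith) (by linarith) (by nlinarith)
    calc (1+x) ^ (-s) * (1+y) ^ (-s) ≤ ((2*κ) ^ s * (1+m) ^ (-s)) * (1+y) ^ (-s) :=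
          mul_le_mul_of_nonneg_right key hys
      _ = (2*κ) ^ s * ((1+m) ^ (-s) * (1+y) ^ (-s)) := by ring
      _ ≤ (2*κ) ^ s * ((1+m) ^ (-s) * ((1+x) ^ (-s) + (1+y) ^ (-s))) := by
          apply mul_le_mul_of_nonneg_left _ (by positivity)
          exact mul_le_mul_of_nonneg_left (by linarith) hms

lemma jb_pos {d : ℕ} (z : Ed d × Ed d) : 0 < jb z := by
  apply Real.sqrt_pos.2; nlinarith [sq_nonneg ‖z.1‖, sq_nonneg ‖z.2‖]

lemma jb_lower {d : ℕ} (z : Ed d × Ed d) : 1 + ‖z‖ ≤ Real.sqrt 2 * jb z := by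
  have hz : ‖z‖ = max ‖z.1‖ ‖z.2‖ := rfl
  have h1 : Real.sqrt 2 * jb z = Real.sqrt (2 * (1 + ‖z.1‖^2 + ‖z.2‖^2)) :=
    (Real.sqrt_mul (by norm_num) _).symm
  rw [h1, show (1 + ‖z‖ : ℝ) = Real.sqrt ((1+‖z‖)^2) from (Real.sqrt_sq (by positivity)).symm]
  apply Real.sqrt_le_sqrt
  rw [hz]
  rcases le_total ‖z.1‖ ‖z.2‖ with h | h
  · rw [max_eq_right h]
    nlinarith [norm_nonneg z.1, norm_nonneg z.2, sq_nonneg (1 - ‖z.2‖), sq_nonneg ‖z.1‖]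
  · rw [max_eq_left h]
    nlinarith [norm_nonneg z.1, norm_nonneg z.2, sq_nonneg (1 - ‖z.1‖), sq_nonneg ‖z.2‖]

lemma jb_upper {d : ℕ} (z : Ed d × Ed d) : jb z ≤ Real.sqrt 2 * (1 + ‖z‖) := by
  have hz : ‖z‖ = max ‖z.1‖ ‖z.2‖ := rfl
  have h1 : Real.sqrt 2 * (1+‖z‖) = Real.sqrt (2 * (1 + ‖z‖)^2) := by
    rw [Real.sqrt_mul (by norm_num), Real.sqrt_sq (by positivity)]
  rw [h1]
  apply Real.sqrt_le_sqrt
  rw [hz]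
  rcases le_total ‖z.1‖ ‖z.2‖ with h | h
  · rw [max_eq_right h]
    nlinarith [norm_nonneg z.1, norm_nonneg z.2, sq_nonneg (1 - ‖z.2‖), sq_nonneg ‖z.1‖]
  · rw [max_eq_left h]
    nlinarith [norm_nonneg z.1, norm_nonneg z.2, sq_nonneg (1 - ‖z.1‖), sq_nonneg ‖z.2‖]

lemma norm_exp_aux (r : ℝ) : ‖Complex.exp (-(2 * Real.pi * Complex.I) * ((r:ℝ) : ℂ))‖ = 1 := by
  rw [show -(2 * Real.pi * Complex.I) * ((r:ℝ) : ℂ) = ((-(2 * Real.pi * r) : ℝ) : ℂ) * Complex.I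
    by push_cast; ring]
  exact Complex.norm_exp_ofReal_mul_I _

lemma wigner_integrand_norm {d : ℕ} (f g : Ed d → ℂ) (x ξ t : Ed d) :
    ‖f (x + (2 : ℝ)⁻¹ • t) * (starRingEnd ℂ) (g (x - (2 : ℝ)⁻¹ • t)) *
      Complex.exp (-(2 * Real.pi * Complex.I) * ((inner ℝ t ξ : ℝ) : ℂ))‖ =
    ‖f (x + (2 : ℝ)⁻¹ • t)‖ * ‖g (x - (2 : ℝ)⁻¹ • t)‖ := by
  rw [norm_mul, norm_mul, norm_exp_aux, mul_one, starRingEnd_apply, norm_star]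

lemma wigner_cont {d : ℕ} (f g : SchwartzMap (Ed d) ℂ) :
    Continuous (fun p : (Ed d × Ed d) × Ed d =>
      (f : Ed d → ℂ) (p.1.1 + (2 : ℝ)⁻¹ • p.2) *
        (starRingEnd ℂ) ((g : Ed d → ℂ) (p.1.1 - (2 : ℝ)⁻¹ • p.2)) *
        Complex.exp (-(2 * Real.pi * Complex.I) * ((inner ℝ p.2 p.1.2 : ℝ) : ℂ))) := by
  have h1 : Continuous fun p : (Ed d × Ed d) × Ed d => p.1.1 + (2 : ℝ)⁻¹ • p.2 :=
    (continuous_fst.fst).add ((continuous_const_smul ((2:ℝ)⁻¹)).comp continuous_snd)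
  have h2 : Continuous fun p : (Ed d × Ed d) × Ed d => p.1.1 - (2 : ℝ)⁻¹ • p.2 :=
    (continuous_fst.fst).sub ((continuous_const_smul ((2:ℝ)⁻¹)).comp continuous_snd)
  have h3 : Continuous fun p : (Ed d × Ed d) × Ed d => (inner ℝ p.2 p.1.2 : ℝ) :=
    continuous_inner.comp (continuous_snd.prodMk continuous_fst.snd)
  exact ((f.continuous.comp h1).mul
    (continuous_star.comp (g.continuous.comp h2))).mul
    (Complex.continuous_exp.comp (continuous_const.mul (Complex.continuous_ofReal.comp h3)))

lemma wigner_sm {d : ℕ} (f g : SchwartzMap (Ed d) ℂ) :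
    StronglyMeasurable (fun u : Ed d × Ed d => wigner (⇑f) (⇑g) u.1 u.2) :=
  (wigner_cont f g).stronglyMeasurable.integral_prod_right'

lemma wigner_bound {d : ℕ} (f g : SchwartzMap (Ed d) ℂ) :
    ∃ B : ℝ, 0 ≤ B ∧ ∀ u : Ed d × Ed d, ‖wigner (⇑f) (⇑g) u.1 u.2‖ ≤ B := by
  set Mg : ℝ := SchwartzMap.seminorm ℝ 0 0 g with hMg
  have hMg0 : 0 ≤ Mg := apply_nonneg _ _
  set If : ℝ := |(((2:ℝ)⁻¹) ^ Module.finrank ℝ (Ed d))⁻¹| * ∫ t : Ed d, ‖f t‖ with hIf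
  have hIf0 : 0 ≤ If :=
    mul_nonneg (abs_nonneg _) (integral_nonneg fun t => norm_nonneg _)
  refine ⟨If * Mg, mul_nonneg hIf0 hMg0, ?_⟩
  rintro ⟨x, ξ⟩
  have hint : Integrable (fun t : Ed d => ‖(f : Ed d → ℂ) (x + (2:ℝ)⁻¹ • t)‖) := by
    have h0 : Integrable (fun t : Ed d => ‖(f : Ed d → ℂ) (x + t)‖) :=
      (f.integrable.norm).comp_add_left x
    exact (integrable_comp_smul_iff volume _ (by norm_num : ((2:ℝ)⁻¹) ≠ 0)).2 h0
  have hval : ∫ t : Ed d, ‖(f : Ed d → ℂ) (x + (2:ℝ)⁻¹ • t)‖ = If := by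
    rw [hIf]
    have h1 := Measure.integral_comp_smul (volume : Measure (Ed d))
      (fun t : Ed d => ‖(f : Ed d → ℂ) (x + t)‖) ((2:ℝ)⁻¹)
    simp only [smul_eq_mul] at h1
    rw [h1, integral_add_left_eq_self (fun t : Ed d => ‖(f : Ed d → ℂ) t‖) x]
  calc ‖wigner (⇑f) (⇑g) x ξ‖
      ≤ ∫ t : Ed d, ‖(f : Ed d → ℂ) (x + (2:ℝ)⁻¹ • t) *
          (starRingEnd ℂ) ((g : Ed d → ℂ) (x - (2:ℝ)⁻¹ • t)) *
          Complex.exp (-(2 * Real.pi * Complex.I) * ((inner ℝ t ξ : ℝ) : ℂ))‖ :=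
        norm_integral_le_integral_norm _
    _ ≤ ∫ t : Ed d, ‖(f : Ed d → ℂ) (x + (2:ℝ)⁻¹ • t)‖ * Mg := by
        apply integral_mono_of_nonneg (Filter.Eventually.of_forall fun t => norm_nonneg _)
          (hint.mul_const Mg)
        apply Filter.Eventually.of_forall
        intro t
        have h2 := wigner_integrand_norm (⇑f) (⇑g) x ξ t
        simp only [h2]
        exact mul_le_mul_of_nonneg_left (SchwartzMap.norm_le_seminorm ℝ g _) (norm_nonneg _)
    _ = If * Mg := by rw [integral_mul_const, hval]

end Aux

/-- composition of operators with Wigner kernels dominated by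
`⟨z - χᵢ(w)⟩^{-2N}` has Wigner kernel `k₁₂(z,u) = ∫ k₁(z,w) k₂(w,u) dw`, dominated by
`⟨z - χ₁(χ₂(u))⟩^{-2N}`. -/
theorem statement2 (d N : ℕ) (hd : 1 ≤ d) (hN : d < N)
    (χ₁ χ₁inv χ₂ χ₂inv : Ed d × Ed d → Ed d × Ed d)
    (h1li : Function.LeftInverse χ₁inv χ₁) (h1ri : Function.RightInverse χ₁inv χ₁)
    (h2li : Function.LeftInverse χ₂inv χ₂) (h2ri : Function.RightInverse χ₂inv χ₂)
    (K₁ K₁' K₂ K₂' : NNReal)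
    (hχ₁ : LipschitzWith K₁ χ₁) (hχ₁inv : LipschitzWith K₁' χ₁inv)
    (hχ₂ : LipschitzWith K₂ χ₂) (hχ₂inv : LipschitzWith K₂' χ₂inv)
    (T₂ : SchwartzMap (Ed d) ℂ →ₗ[ℂ] SchwartzMap (Ed d) ℂ)
    (T₁ : SchwartzMap (Ed d) ℂ →ₗ[ℂ] Lp ℂ 2 (volume : Measure (Ed d)))
    (k₁ k₂ : Ed d × Ed d → Ed d × Ed d → ℂ)
    (hk₁meas : Measurable (Function.uncurry k₁))
    (hk₂meas : Measurable (Function.uncurry k₂))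
    (C : ℝ) (hC : 0 < C)
    (hrep₁ : ∀ f g : SchwartzMap (Ed d) ℂ, ∀ z : Ed d × Ed d,
      Integrable (fun w : Ed d × Ed d => k₁ z w * wigner (⇑f) (⇑g) w.1 w.2) volume ∧
      wigner (⇑(T₁ f)) (⇑(T₁ g)) z.1 z.2 =
        ∫ w : Ed d × Ed d, k₁ z w * wigner (⇑f) (⇑g) w.1 w.2)
    (hrep₂ : ∀ f g : SchwartzMap (Ed d) ℂ, ∀ z : Ed d × Ed d,
      Integrable (fun w : Ed d × Ed d => k₂ z w * wigner (⇑f) (⇑g) w.1 w.2) volume ∧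
      wigner (⇑(T₂ f)) (⇑(T₂ g)) z.1 z.2 =
        ∫ w : Ed d × Ed d, k₂ z w * wigner (⇑f) (⇑g) w.1 w.2)
    (hb₁ : ∀ z w : Ed d × Ed d, ‖k₁ z w‖ ≤ C * jb (z - χ₁ w) ^ (-(2 * (N : ℝ))))
    (hb₂ : ∀ z w : Ed d × Ed d, ‖k₂ z w‖ ≤ C * jb (z - χ₂ w) ^ (-(2 * (N : ℝ)))) :
    (∀ f g : SchwartzMap (Ed d) ℂ, ∀ z : Ed d × Ed d,
      Integrable (fun u : Ed d × Ed d =>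
        (∫ w : Ed d × Ed d, k₁ z w * k₂ w u) * wigner (⇑f) (⇑g) u.1 u.2) volume ∧
      wigner (⇑(T₁ (T₂ f))) (⇑(T₁ (T₂ g))) z.1 z.2 =
        ∫ u : Ed d × Ed d,
          (∫ w : Ed d × Ed d, k₁ z w * k₂ w u) * wigner (⇑f) (⇑g) u.1 u.2) ∧
    ∃ C' > 0, ∀ z u : Ed d × Ed d,
      ‖∫ w : Ed d × Ed d, k₁ z w * k₂ w u‖ ≤ C' * jb (z - χ₁ (χ₂ u)) ^ (-(2 * (N : ℝ))) := by
  classical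
  have hC0 : (0:ℝ) ≤ C := hC.le
  set s : ℝ := 2 * (N : ℝ) with hsdef
  have hs0 : (0:ℝ) ≤ s := by rw [hsdef]; positivity
  have hsqrt2 : (0:ℝ) < Real.sqrt 2 := by positivity
  set c₀ : ℝ := Real.sqrt 2 ^ s with hc₀def
  have hc₀ : 0 < c₀ := Real.rpow_pos_of_pos hsqrt2 _
  have hκ₁pos : (0:ℝ) < max (K₁':ℝ) 1 := lt_of_lt_of_le zero_lt_one (le_max_right _ _)
  have hκ₂pos : (0:ℝ) < max (K₂':ℝ) 1 := lt_of_lt_of_le zero_lt_one (le_max_right _ _)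
  have hκ₁s : (0:ℝ) ≤ (max (K₁':ℝ) 1) ^ s := (Real.rpow_pos_of_pos hκ₁pos _).le
  have hκ₂s : (0:ℝ) ≤ (max (K₂':ℝ) 1) ^ s := (Real.rpow_pos_of_pos hκ₂pos _).le
  -- basic integrability of the weight
  have hInt : Integrable (fun z : Ed d × Ed d => (1+‖z‖) ^ (-s)) := by
    apply integrable_one_add_norm
    rw [Module.finrank_prod, finrank_euclideanSpace_fin]
    have h2 : (d:ℝ) < N := by exact_mod_cast hN
    rw [hsdef]; push_cast; linarith
  have hIntc : ∀ c : Ed d × Ed d, Integrable (fun w : Ed d × Ed d => (1+‖w - c‖) ^ (-s)) :=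
    fun c => hInt.comp_sub_right c
  set A : ℝ := ∫ z : Ed d × Ed d, (1+‖z‖) ^ (-s) with hAdef
  have hIntEq : ∀ c : Ed d × Ed d, (∫ w : Ed d × Ed d, (1+‖w - c‖) ^ (-s)) = A :=
    fun c => integral_sub_right_eq_self (fun z : Ed d × Ed d => (1+‖z‖) ^ (-s)) c
  have hA0 : 0 ≤ A := integral_nonneg fun z => Real.rpow_nonneg (by positivity) _
  -- comparisons between `jb` and `1 + ‖·‖`
  have hjb₁ : ∀ v : Ed d × Ed d, jb v ^ (-s) ≤ c₀ * (1+‖v‖) ^ (-s) :=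
    fun v => aux1 hs0 (by positivity) hsqrt2 (jb_lower v)
  have hjb₂ : ∀ v : Ed d × Ed d, (1+‖v‖) ^ (-s) ≤ c₀ * jb v ^ (-s) :=
    fun v => aux1 hs0 (jb_pos v) hsqrt2 (jb_upper v)
  -- kernel bounds in `1 + ‖·‖` form
  have hk₁' : ∀ z w : Ed d × Ed d, ‖k₁ z w‖ ≤ C * c₀ * (1+‖z - χ₁ w‖) ^ (-s) := by
    intro z w
    calc ‖k₁ z w‖ ≤ C * jb (z - χ₁ w) ^ (-s) := hb₁ z w
      _ ≤ C * (c₀ * (1+‖z - χ₁ w‖) ^ (-s)) := mul_le_mul_of_nonneg_left (hjb₁ _) hC0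
      _ = C * c₀ * (1+‖z - χ₁ w‖) ^ (-s) := by ring
  have hk₂' : ∀ z w : Ed d × Ed d, ‖k₂ z w‖ ≤ C * c₀ * (1+‖z - χ₂ w‖) ^ (-s) := by
    intro z w
    calc ‖k₂ z w‖ ≤ C * jb (z - χ₂ w) ^ (-s) := hb₂ z w
      _ ≤ C * (c₀ * (1+‖z - χ₂ w‖) ^ (-s)) := mul_le_mul_of_nonneg_left (hjb₁ _) hC0
      _ = C * c₀ * (1+‖z - χ₂ w‖) ^ (-s) := by ring
  -- pulling back via the inverse Lipschitz maps
  have hpull₁ : ∀ z w : Ed d × Ed d,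
      (1+‖z - χ₁ w‖) ^ (-s) ≤ (max (K₁':ℝ) 1) ^ s * (1+‖w - χ₁inv z‖) ^ (-s) := by
    intro z w
    have hd1 : ‖w - χ₁inv z‖ ≤ (K₁':ℝ) * ‖z - χ₁ w‖ := by
      have h := hχ₁inv.dist_le_mul z (χ₁ w)
      rw [h1li w] at h
      rw [dist_eq_norm, dist_eq_norm] at h
      calc ‖w - χ₁inv z‖ = ‖χ₁inv z - w‖ := norm_sub_rev _ _
        _ ≤ (K₁':ℝ) * ‖z - χ₁ w‖ := h
    apply aux1 hs0 (by positivity) hκ₁pos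
    have hmax1 : (K₁':ℝ) ≤ max (K₁':ℝ) 1 := le_max_left _ _
    have hmax2 : (1:ℝ) ≤ max (K₁':ℝ) 1 := le_max_right _ _
    nlinarith [norm_nonneg (z - χ₁ w)]
  have hpull₂ : ∀ w u : Ed d × Ed d,
      (1+‖w - χ₂ u‖) ^ (-s) ≤ (max (K₂':ℝ) 1) ^ s * (1+‖u - χ₂inv w‖) ^ (-s) := by
    intro w u
    have hd1 : ‖u - χ₂inv w‖ ≤ (K₂':ℝ) * ‖w - χ₂ u‖ := by
      have h := hχ₂inv.dist_le_mul w (χ₂ u)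
      rw [h2li u] at h
      rw [dist_eq_norm, dist_eq_norm] at h
      calc ‖u - χ₂inv w‖ = ‖χ₂inv w - u‖ := norm_sub_rev _ _
        _ ≤ (K₂':ℝ) * ‖w - χ₂ u‖ := h
    apply aux1 hs0 (by positivity) hκ₂pos
    have hmax1 : (K₂':ℝ) ≤ max (K₂':ℝ) 1 := le_max_left _ _
    have hmax2 : (1:ℝ) ≤ max (K₂':ℝ) 1 := le_max_right _ _
    nlinarith [norm_nonneg (w - χ₂ u)]
  -- Peetre-type inequality
  have hpeetre : ∀ z u w : Ed d × Ed d,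
      (1+‖z - χ₁ w‖) ^ (-s) * (1+‖w - χ₂ u‖) ^ (-s) ≤
      (2 * max (K₁:ℝ) 1) ^ s * ((1+‖z - χ₁ (χ₂ u)‖) ^ (-s) *
        ((1+‖z - χ₁ w‖) ^ (-s) + (1+‖w - χ₂ u‖) ^ (-s))) := by
    intro z u w
    apply aux2 hs0 (le_max_right _ _) (norm_nonneg _) (norm_nonneg _) (norm_nonneg _)
    have h1 : ‖z - χ₁ (χ₂ u)‖ ≤ ‖z - χ₁ w‖ + ‖χ₁ w - χ₁ (χ₂ u)‖ := by
      calc ‖z - χ₁ (χ₂ u)‖ = ‖(z - χ₁ w) + (χ₁ w - χ₁ (χ₂ u))‖ := by abel_nf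
        _ ≤ ‖z - χ₁ w‖ + ‖χ₁ w - χ₁ (χ₂ u)‖ := norm_add_le _ _
    have h2 : ‖χ₁ w - χ₁ (χ₂ u)‖ ≤ (K₁:ℝ) * ‖w - χ₂ u‖ := by
      have h := hχ₁.dist_le_mul w (χ₂ u)
      rw [dist_eq_norm, dist_eq_norm] at h
      exact h
    have hmax : (K₁:ℝ) ≤ max (K₁:ℝ) 1 := le_max_left _ _
    nlinarith [norm_nonneg (w - χ₂ u)]
  set CC : ℝ := C * c₀ * (C * c₀) * (2 * max (K₁:ℝ) 1) ^ s with hCCdef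
  have hCC0 : 0 < CC := by
    rw [hCCdef]
    have : (0:ℝ) < (2 * max (K₁:ℝ) 1) ^ s :=
      Real.rpow_pos_of_pos (by positivity) _
    positivity
  -- pointwise bound for the product kernel
  have hprod : ∀ z u w : Ed d × Ed d, ‖k₁ z w * k₂ w u‖ ≤
      (CC * (1+‖z - χ₁ (χ₂ u)‖) ^ (-s)) *
        ((max (K₁':ℝ) 1) ^ s * (1+‖w - χ₁inv z‖) ^ (-s) + (1+‖w - χ₂ u‖) ^ (-s)) := by
    intro z u w
    have hmn : (0:ℝ) ≤ (1+‖z - χ₁ (χ₂ u)‖) ^ (-s) := Real.rpow_nonneg (by positivity) _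
    have hCCm : (0:ℝ) ≤ CC * (1+‖z - χ₁ (χ₂ u)‖) ^ (-s) := mul_nonneg hCC0.le hmn
    calc ‖k₁ z w * k₂ w u‖ = ‖k₁ z w‖ * ‖k₂ w u‖ := norm_mul _ _
      _ ≤ (C * c₀ * (1+‖z - χ₁ w‖) ^ (-s)) * (C * c₀ * (1+‖w - χ₂ u‖) ^ (-s)) :=
          mul_le_mul (hk₁' z w) (hk₂' w u) (norm_nonneg _) (by positivity)
      _ = (C * c₀ * (C * c₀)) * ((1+‖z - χ₁ w‖) ^ (-s) * (1+‖w - χ₂ u‖) ^ (-s)) := by ring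
      _ ≤ (C * c₀ * (C * c₀)) * ((2 * max (K₁:ℝ) 1) ^ s * ((1+‖z - χ₁ (χ₂ u)‖) ^ (-s) *
            ((1+‖z - χ₁ w‖) ^ (-s) + (1+‖w - χ₂ u‖) ^ (-s)))) :=
          mul_le_mul_of_nonneg_left (hpeetre z u w) (by positivity)
      _ = (CC * (1+‖z - χ₁ (χ₂ u)‖) ^ (-s)) *
            ((1+‖z - χ₁ w‖) ^ (-s) + (1+‖w - χ₂ u‖) ^ (-s)) := by rw [hCCdef]; ring
      _ ≤ (CC * (1+‖z - χ₁ (χ₂ u)‖) ^ (-s)) *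
            ((max (K₁':ℝ) 1) ^ s * (1+‖w - χ₁inv z‖) ^ (-s) + (1+‖w - χ₂ u‖) ^ (-s)) :=
          mul_le_mul_of_nonneg_left (add_le_add_left (hpull₁ z w) _) hCCm
  -- the majorant is integrable with explicit integral
  have hMaj : ∀ z u : Ed d × Ed d, Integrable (fun w : Ed d × Ed d =>
      (CC * (1+‖z - χ₁ (χ₂ u)‖) ^ (-s)) *
        ((max (K₁':ℝ) 1) ^ s * (1+‖w - χ₁inv z‖) ^ (-s) + (1+‖w - χ₂ u‖) ^ (-s))) :=
    fun z u => (((hIntc (χ₁inv z)).const_mul _).add (hIntc (χ₂ u))).const_mul _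
  have hMajVal : ∀ z u : Ed d × Ed d, (∫ w : Ed d × Ed d,
      (CC * (1+‖z - χ₁ (χ₂ u)‖) ^ (-s)) *
        ((max (K₁':ℝ) 1) ^ s * (1+‖w - χ₁inv z‖) ^ (-s) + (1+‖w - χ₂ u‖) ^ (-s))) =
      (CC * (1+‖z - χ₁ (χ₂ u)‖) ^ (-s)) * ((max (K₁':ℝ) 1) ^ s * A + A) := by
    intro z u
    rw [integral_const_mul, integral_add ((hIntc (χ₁inv z)).const_mul _) (hIntc (χ₂ u)),
      integral_const_mul, hIntEq (χ₁inv z), hIntEq (χ₂ u)]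
  -- measurability of sections
  have hsect₁ : ∀ z : Ed d × Ed d, Measurable (fun w : Ed d × Ed d => k₁ z w) :=
    fun z => hk₁meas.comp measurable_prodMk_left
  have hsect₂ : ∀ u : Ed d × Ed d, Measurable (fun w : Ed d × Ed d => k₂ w u) :=
    fun u => hk₂meas.comp (measurable_id.prodMk measurable_const)
  -- integrability of the composed kernel and its bound
  have hKint : ∀ z u : Ed d × Ed d, Integrable (fun w : Ed d × Ed d => k₁ z w * k₂ w u) :=
    fun z u => (hMaj z u).mono' ((hsect₁ z).mul (hsect₂ u)).aestronglyMeasurable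
      (Filter.Eventually.of_forall (hprod z u))
  have hKbd : ∀ z u : Ed d × Ed d, ‖∫ w : Ed d × Ed d, k₁ z w * k₂ w u‖ ≤
      (CC * (1+‖z - χ₁ (χ₂ u)‖) ^ (-s)) * ((max (K₁':ℝ) 1) ^ s * A + A) := by
    intro z u
    calc ‖∫ w : Ed d × Ed d, k₁ z w * k₂ w u‖
        ≤ ∫ w : Ed d × Ed d, ‖k₁ z w * k₂ w u‖ := norm_integral_le_integral_norm _
      _ ≤ ∫ w : Ed d × Ed d, (CC * (1+‖z - χ₁ (χ₂ u)‖) ^ (-s)) *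
            ((max (K₁':ℝ) 1) ^ s * (1+‖w - χ₁inv z‖) ^ (-s) + (1+‖w - χ₂ u‖) ^ (-s)) :=
          integral_mono_of_nonneg (Filter.Eventually.of_forall fun w => norm_nonneg _)
            (hMaj z u) (Filter.Eventually.of_forall (hprod z u))
      _ = (CC * (1+‖z - χ₁ (χ₂ u)‖) ^ (-s)) * ((max (K₁':ℝ) 1) ^ s * A + A) := hMajVal z u
  constructor
  · -- the representation formula for the composition
    intro f g z
    obtain ⟨B, hB0, hWB⟩ := wigner_bound f g
    have hWsm := wigner_sm f g
    have hGm : Measurable (fun p : (Ed d × Ed d) × (Ed d × Ed d) =>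
        k₁ z p.1 * (k₂ p.1 p.2 * wigner (⇑f) (⇑g) p.2.1 p.2.2)) := by
      apply (hk₁meas.comp (measurable_const.prodMk measurable_fst)).mul
      exact hk₂meas.mul ((hWsm.measurable).comp measurable_snd)
    have haeInt : ∀ w : Ed d × Ed d,
        Integrable (fun u : Ed d × Ed d =>
          k₁ z w * (k₂ w u * wigner (⇑f) (⇑g) u.1 u.2)) :=
      fun w => ((hrep₂ f g w).1).const_mul _
    have hD0 : (0:ℝ) ≤ C * c₀ * (max (K₂':ℝ) 1) ^ s * B * A :=
      mul_nonneg (mul_nonneg (mul_nonneg (mul_nonneg hC0 hc₀.le) hκ₂s) hB0) hA0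
    have hD : ∀ w : Ed d × Ed d,
        (∫ u : Ed d × Ed d, ‖k₂ w u * wigner (⇑f) (⇑g) u.1 u.2‖) ≤
        C * c₀ * (max (K₂':ℝ) 1) ^ s * B * A := by
      intro w
      have hmu : Integrable (fun u : Ed d × Ed d =>
          (C * c₀ * (max (K₂':ℝ) 1) ^ s * B) * (1+‖u - χ₂inv w‖) ^ (-s)) :=
        (hIntc (χ₂inv w)).const_mul _
      have hle : ∀ u : Ed d × Ed d, ‖k₂ w u * wigner (⇑f) (⇑g) u.1 u.2‖ ≤
          (C * c₀ * (max (K₂':ℝ) 1) ^ s * B) * (1+‖u - χ₂inv w‖) ^ (-s) := by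
        intro u
        have p2 : ‖k₂ w u‖ ≤ C * c₀ * ((max (K₂':ℝ) 1) ^ s * (1+‖u - χ₂inv w‖) ^ (-s)) :=
          (hk₂' w u).trans (by
            calc C * c₀ * (1+‖w - χ₂ u‖) ^ (-s)
                ≤ C * c₀ * ((max (K₂':ℝ) 1) ^ s * (1+‖u - χ₂inv w‖) ^ (-s)) :=
                  mul_le_mul_of_nonneg_left (hpull₂ w u) (by positivity))
        calc ‖k₂ w u * wigner (⇑f) (⇑g) u.1 u.2‖
            = ‖k₂ w u‖ * ‖wigner (⇑f) (⇑g) u.1 u.2‖ := norm_mul _ _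
          _ ≤ (C * c₀ * ((max (K₂':ℝ) 1) ^ s * (1+‖u - χ₂inv w‖) ^ (-s))) * B :=
              mul_le_mul p2 (hWB u) (norm_nonneg _) (by positivity)
          _ = (C * c₀ * (max (K₂':ℝ) 1) ^ s * B) * (1+‖u - χ₂inv w‖) ^ (-s) := by ring
      calc (∫ u : Ed d × Ed d, ‖k₂ w u * wigner (⇑f) (⇑g) u.1 u.2‖)
          ≤ ∫ u : Ed d × Ed d,
              (C * c₀ * (max (K₂':ℝ) 1) ^ s * B) * (1+‖u - χ₂inv w‖) ^ (-s) :=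
            integral_mono_of_nonneg (Filter.Eventually.of_forall fun u => norm_nonneg _)
              hmu (Filter.Eventually.of_forall hle)
        _ = C * c₀ * (max (K₂':ℝ) 1) ^ s * B * A := by
            rw [integral_const_mul, hIntEq (χ₂inv w)]
    have hGint : Integrable (fun p : (Ed d × Ed d) × (Ed d × Ed d) =>
        k₁ z p.1 * (k₂ p.1 p.2 * wigner (⇑f) (⇑g) p.2.1 p.2.2))
        ((volume : Measure (Ed d × Ed d)).prod volume) := by
      refine (integrable_prod_iff hGm.aestronglyMeasurable).2
        ⟨Filter.Eventually.of_forall haeInt, ?_⟩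
      have hmeas2 : AEStronglyMeasurable (fun w : Ed d × Ed d =>
          ∫ u : Ed d × Ed d, ‖k₁ z w * (k₂ w u * wigner (⇑f) (⇑g) u.1 u.2)‖) volume :=
        (hGm.norm.aestronglyMeasurable).integral_prod_right'
      refine Integrable.mono' ((hIntc (χ₁inv z)).const_mul
        (C * c₀ * (max (K₁':ℝ) 1) ^ s * (C * c₀ * (max (K₂':ℝ) 1) ^ s * B * A)))
        hmeas2 ?_
      refine Filter.Eventually.of_forall fun w => ?_
      have hnn : (0:ℝ) ≤ ∫ u : Ed d × Ed d, ‖k₁ z w * (k₂ w u * wigner (⇑f) (⇑g) u.1 u.2)‖ :=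
        integral_nonneg fun u => norm_nonneg _
      rw [Real.norm_of_nonneg hnn]
      have e1 : ∀ u : Ed d × Ed d, ‖k₁ z w * (k₂ w u * wigner (⇑f) (⇑g) u.1 u.2)‖
          = ‖k₁ z w‖ * ‖k₂ w u * wigner (⇑f) (⇑g) u.1 u.2‖ := fun u => norm_mul _ _
      have p1 : ‖k₁ z w‖ ≤ C * c₀ * ((max (K₁':ℝ) 1) ^ s * (1+‖w - χ₁inv z‖) ^ (-s)) :=
        (hk₁' z w).trans (mul_le_mul_of_nonneg_left (hpull₁ z w) (by positivity))
      calc (∫ u : Ed d × Ed d, ‖k₁ z w * (k₂ w u * wigner (⇑f) (⇑g) u.1 u.2)‖)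
          = ∫ u : Ed d × Ed d, ‖k₁ z w‖ * ‖k₂ w u * wigner (⇑f) (⇑g) u.1 u.2‖ := by
            simp only [e1]
        _ = ‖k₁ z w‖ * ∫ u : Ed d × Ed d, ‖k₂ w u * wigner (⇑f) (⇑g) u.1 u.2‖ :=
            integral_const_mul _ _
        _ ≤ ‖k₁ z w‖ * (C * c₀ * (max (K₂':ℝ) 1) ^ s * B * A) :=
            mul_le_mul_of_nonneg_left (hD w) (norm_nonneg _)
        _ ≤ (C * c₀ * ((max (K₁':ℝ) 1) ^ s * (1+‖w - χ₁inv z‖) ^ (-s))) *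
              (C * c₀ * (max (K₂':ℝ) 1) ^ s * B * A) :=
            mul_le_mul_of_nonneg_right p1 hD0
        _ = (C * c₀ * (max (K₁':ℝ) 1) ^ s * (C * c₀ * (max (K₂':ℝ) 1) ^ s * B * A)) *
              (1+‖w - χ₁inv z‖) ^ (-s) := by ring
    have hswap_inner : ∀ u : Ed d × Ed d,
        (∫ w : Ed d × Ed d, k₁ z w * (k₂ w u * wigner (⇑f) (⇑g) u.1 u.2)) =
        (∫ w : Ed d × Ed d, k₁ z w * k₂ w u) * wigner (⇑f) (⇑g) u.1 u.2 := by
      intro u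
      rw [show (fun w : Ed d × Ed d => k₁ z w * (k₂ w u * wigner (⇑f) (⇑g) u.1 u.2))
          = fun w : Ed d × Ed d => (k₁ z w * k₂ w u) * wigner (⇑f) (⇑g) u.1 u.2
          from funext fun w => by ring]
      exact integral_mul_const _ _
    constructor
    · have h1 : Integrable (fun u : Ed d × Ed d =>
          ∫ w : Ed d × Ed d, k₁ z w * (k₂ w u * wigner (⇑f) (⇑g) u.1 u.2)) volume :=
        hGint.integral_prod_right
      exact h1.congr (Filter.Eventually.of_forall fun u => hswap_inner u)
    · calc wigner (⇑(T₁ (T₂ f))) (⇑(T₁ (T₂ g))) z.1 z.2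
          = ∫ w : Ed d × Ed d, k₁ z w * wigner (⇑(T₂ f)) (⇑(T₂ g)) w.1 w.2 :=
            (hrep₁ (T₂ f) (T₂ g) z).2
        _ = ∫ w : Ed d × Ed d, k₁ z w *
              ∫ u : Ed d × Ed d, k₂ w u * wigner (⇑f) (⇑g) u.1 u.2 := by
            refine integral_congr_ae (Filter.Eventually.of_forall fun w => ?_)
            beta_reduce
            rw [(hrep₂ f g w).2]
        _ = ∫ w : Ed d × Ed d, ∫ u : Ed d × Ed d,
              k₁ z w * (k₂ w u * wigner (⇑f) (⇑g) u.1 u.2) := by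
            refine integral_congr_ae (Filter.Eventually.of_forall fun w => ?_)
            beta_reduce
            rw [integral_const_mul]
        _ = ∫ u : Ed d × Ed d, ∫ w : Ed d × Ed d,
              k₁ z w * (k₂ w u * wigner (⇑f) (⇑g) u.1 u.2) :=
            integral_integral_swap hGint
        _ = ∫ u : Ed d × Ed d,
              (∫ w : Ed d × Ed d, k₁ z w * k₂ w u) * wigner (⇑f) (⇑g) u.1 u.2 :=
            integral_congr_ae (Filter.Eventually.of_forall fun u => hswap_inner u)
  · -- the decay estimate for the composed kernel
    refine ⟨max (CC * ((max (K₁':ℝ) 1) ^ s * A + A) * c₀) 1,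
      lt_of_lt_of_le zero_lt_one (le_max_right _ _), ?_⟩
    intro z u
    have hjbn : (0:ℝ) ≤ jb (z - χ₁ (χ₂ u)) ^ (-s) := Real.rpow_nonneg (jb_pos _).le _
    have hCA : (0:ℝ) ≤ CC * ((max (K₁':ℝ) 1) ^ s * A + A) :=
      mul_nonneg hCC0.le (add_nonneg (mul_nonneg hκ₁s hA0) hA0)
    calc ‖∫ w : Ed d × Ed d, k₁ z w * k₂ w u‖
        ≤ (CC * (1+‖z - χ₁ (χ₂ u)‖) ^ (-s)) * ((max (K₁':ℝ) 1) ^ s * A + A) := hKbd z u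
      _ = (CC * ((max (K₁':ℝ) 1) ^ s * A + A)) * (1+‖z - χ₁ (χ₂ u)‖) ^ (-s) := by ring
      _ ≤ (CC * ((max (K₁':ℝ) 1) ^ s * A + A)) * (c₀ * jb (z - χ₁ (χ₂ u)) ^ (-s)) :=
          mul_le_mul_of_nonneg_left (hjb₂ _) hCA
      _ = (CC * ((max (K₁':ℝ) 1) ^ s * A + A) * c₀) * jb (z - χ₁ (χ₂ u)) ^ (-s) := by ring
      _ ≤ max (CC * ((max (K₁':ℝ) 1) ^ s * A + A) * c₀) 1 * jb (z - χ₁ (χ₂ u)) ^ (-s) :=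
          mul_le_mul_of_nonneg_right (le_max_left _ _) hjbn
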